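/- arXiv:1107.0127 — 6 statements merged into one kernel-verified Lean document; each statement's English description precedes it below -/
import Mathlib

section
/- Suppose a family of probability measures (μ_t)_{t∈[0,1]} on ℤ satisfies μ_0 = δ_0, μ_1 = δ_n, and for all f: ℤ → ℝ with finite support, d/dt ∑_k f(k)μ_t(k) = n ∑_k (∇f)(k)μ_t(k), where ∇ is a derivative defined by coefficients (α_k)_{k∈ℤ} with α_k ∈ [0,1] via (∇f)(k) = α_k(f(k)-f(k-1)) + (1-α_k)(f(k+1)-f(k)). Then α_0 = 0. -/
open Finset

/-- The derivative on `ℤ` with mixing coefficients `α`. -/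
noncomputable def nabla (α : ℤ → ℝ) (f : ℤ → ℝ) (k : ℤ) : ℝ :=
  α k * (f k - f (k - 1)) + (1 - α k) * (f (k + 1) - f k)

/-- If `g` has a derivative `d` within `[0,1]` at `0`, `g 0 = 0`, and `g ≥ 0` on `[0,1]`,
then `d ≥ 0`. -/
lemma deriv_nonneg_of_min {g : ℝ → ℝ} {d : ℝ}
    (hderiv : HasDerivWithinAt g d (Set.Icc 0 1) 0)
    (hg0 : g 0 = 0) (hge : ∀ t ∈ Set.Icc (0:ℝ) 1, 0 ≤ g t) : 0 ≤ d := by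
  have htends := hasDerivWithinAt_iff_tendsto_slope.mp hderiv
  have hset : Set.Icc (0:ℝ) 1 \ {0} = Set.Ioc 0 1 := by
    ext x
    simp only [Set.mem_diff, Set.mem_Icc, Set.mem_singleton_iff, Set.mem_Ioc]
    constructor
    · rintro ⟨⟨h1, h2⟩, h3⟩; exact ⟨lt_of_le_of_ne h1 (Ne.symm h3), h2⟩
    · rintro ⟨h1, h2⟩; exact ⟨⟨le_of_lt h1, h2⟩, ne_of_gt h1⟩
  rw [hset] at htends
  have hne : (nhdsWithin (0:ℝ) (Set.Ioc 0 1)).NeBot := by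
    apply mem_closure_iff_nhdsWithin_neBot.mp
    have : (0:ℝ) ∈ closure (Set.Ioc (0:ℝ) 1) := by
      rw [closure_Ioc (by norm_num : (0:ℝ) ≠ 1)]
      exact ⟨le_refl _, by norm_num⟩
    exact this
  refine ge_of_tendsto htends ?_
  filter_upwards [self_mem_nhdsWithin] with x hx
  rcases hx with ⟨hx0, hx1⟩
  have : slope g 0 x = g x / x := by
    simp [slope_def_field, hg0, div_eq_inv_mul]
  rw [this]
  exact div_nonneg (hge x ⟨le_of_lt hx0, hx1⟩) (le_of_lt hx0)

theorem stmt2 (n : ℕ) (hn : 1 ≤ n) (α : ℤ → ℝ) (hα : ∀ k, α k ∈ Set.Icc (0 : ℝ) 1)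
    (μ : ℝ → ℤ → ℝ)
    (hprob : ∀ t ∈ Set.Icc (0 : ℝ) 1, (∀ k, 0 ≤ μ t k) ∧ HasSum (μ t) 1)
    (h0 : ∀ k, μ 0 k = if k = 0 then 1 else 0)
    (h1 : ∀ k, μ 1 k = if k = (n : ℤ) then 1 else 0)
    (heq : ∀ f : ℤ → ℝ, (Function.support f).Finite → ∀ t ∈ Set.Icc (0 : ℝ) 1,
      HasDerivWithinAt (fun s => ∑' k : ℤ, f k * μ s k)
        ((n : ℝ) * ∑' k : ℤ, nabla α f k * μ t k) (Set.Icc 0 1) t) :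
    α 0 = 0 := by
  set f : ℤ → ℝ := fun k => if k = -1 then 1 else 0 with hf
  have hsupp : (Function.support f).Finite := by
    apply Set.Finite.subset (Set.finite_singleton (-1 : ℤ))
    intro x hx
    simp only [Function.mem_support, hf, ne_eq, ite_eq_right_iff, not_forall] at hx
    simpa using hx.1
  -- the tsum is just μ s (-1)
  have hts : ∀ s : ℝ, (∑' k : ℤ, f k * μ s k) = μ s (-1) := by
    intro s
    rw [tsum_eq_single (-1 : ℤ) (fun b hb => by simp [hf, hb])]
    simp [hf]
  -- the nabla tsum at t = 0
  have hts2 : (∑' k : ℤ, nabla α f k * μ 0 k) = -(α 0) := by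
    rw [tsum_eq_single (0 : ℤ) (fun b hb => by rw [h0]; simp [hb])]
    rw [h0]
    simp [nabla, hf]
  have hmem : (0:ℝ) ∈ Set.Icc (0:ℝ) 1 := ⟨le_refl _, by norm_num⟩
  have hd := heq f hsupp 0 hmem
  rw [hts2] at hd
  have hd' : HasDerivWithinAt (fun s => μ s (-1)) ((n : ℝ) * -(α 0)) (Set.Icc 0 1) 0 := by
    apply hd.congr
    · intro x _; exact (hts x).symm
    · exact (hts 0).symm
  have hzero : μ 0 (-1) = 0 := by rw [h0]; norm_num
  have hnonneg : ∀ t ∈ Set.Icc (0:ℝ) 1, 0 ≤ μ t (-1) := fun t ht => (hprob t ht).1 (-1)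
  have := deriv_nonneg_of_min hd' hzero hnonneg
  have hnpos : (0:ℝ) < n := by exact_mod_cast hn
  have hα0 : α 0 ≤ 0 := by nlinarith
  exact le_antisymm hα0 (hα 0).1
end

section
/- Suppose a family of probability measures (μ_t)_{t∈[0,1]} on ℤ satisfies μ_0 = δ_0, μ_1 = δ_n, and for all finitely supported f: ℤ → ℝ, d/dt ∑_k f(k)μ_t(k) = n ∑_k (∇f)(k)μ_t(k), where ∇ is given by coefficients (α_k) ∈ [0,1]. Then for every t ∈ [0,1], the support of μ_t is contained in {0,...,n}. -/
open Filter Topology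

lemma Convex.sub_le_mul_sub_of_hasDerivWithinAt_le {D : Set ℝ} (hD : Convex ℝ D)
    {f f' : ℝ → ℝ} {C : ℝ} (hf : ∀ x ∈ D, HasDerivWithinAt f (f' x) D x)
    (hf'C : ∀ x ∈ D, f' x ≤ C) {x y : ℝ} (hx : x ∈ D) (hy : y ∈ D) (hxy : x ≤ y) :
    f y - f x ≤ C * (y - x) := by
  have hderiv (t : ℝ) (ht : t ∈ D) :
      HasDerivWithinAt (fun u => C * u - f u) (C - f' t) D t := by
    simpa using ((hasDerivWithinAt_id t D).const_mul C).fun_sub (hf t ht)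
  have hmono : MonotoneOn (fun u => C * u - f u) D :=
    monotoneOn_of_hasDerivWithinAt_nonneg hD
      (fun t ht => (hderiv t ht).continuousWithinAt)
      (fun t ht => (hderiv t (interior_subset ht)).mono interior_subset)
      (fun t ht => sub_nonneg.2 (hf'C t (interior_subset ht)))
  linarith [hmono hx hy hxy]

lemma nonpos_of_forall_pos_le_mul {c x : ℝ} (h : ∀ ε > 0, x ≤ c * ε) : x ≤ 0 := by
  have hlim : Tendsto (fun ε => c * ε) (𝓝[>] 0) (𝓝 0) := by
    simpa using ((continuous_const_mul c).tendsto 0).mono_left nhdsWithin_le_nhds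
  exact ge_of_tendsto hlim (eventually_nhdsWithin_of_forall h)

lemma summable_mul_of_support_finite {ι : Type*} {f : ι → ℝ} (hf : (Function.support f).Finite)
    (g : ι → ℝ) : Summable fun i => f i * g i :=
  summable_of_hasFiniteSupport (hf.subset (Function.support_mul_subset_left f g))

lemma tsum_mul_le_of_hasSum_one {ι : Type*} {g p : ι → ℝ} {s : ℝ} (hp : 0 ≤ p)
    (hp1 : HasSum p 1) (hgp : Summable fun i => g i * p i) (hgs : ∀ i, g i ≤ s) :
    ∑' i, g i * p i ≤ s :=
  calc ∑' i, g i * p i ≤ ∑' i, s * p i :=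
        hgp.tsum_le_tsum (fun i => mul_le_mul_of_nonneg_right (hgs i) (hp i))
          (hp1.summable.mul_left s)
    _ = s := by rw [tsum_mul_left, hp1.tsum_eq, mul_one]

lemma apply_le_tsum_mul {ι : Type*} {f p : ι → ℝ} (hf : 0 ≤ f) (hp : 0 ≤ p)
    (hfp : Summable fun i => f i * p i) {i : ι} (hfi : f i = 1) : p i ≤ ∑' j, f j * p j := by
  simpa [hfi] using hfp.le_tsum i fun j _ => mul_nonneg (hf j) (hp j)

namespace nabla

lemma support_finite {α f : ℤ → ℝ} (hf : (Function.support f).Finite) :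
    (Function.support (nabla α f)).Finite := by
  refine ((hf.preimage (Set.injOn_of_injective (sub_left_injective (b := 1)))).union
    (hf.union (hf.preimage (Set.injOn_of_injective (add_left_injective 1))))).subset ?_
  intro j hj
  contrapose! hj
  simp only [Set.mem_union, Set.mem_preimage, Function.mem_support, not_or, not_not] at hj
  obtain ⟨hprev, hself, hnext⟩ := hj
  simp [nabla, hprev, hself, hnext]

lemma le_of_forall_sub_le {α f : ℤ → ℝ} {s : ℝ} {k : ℤ} (hα : α k ∈ Set.Icc (0 : ℝ) 1)
    (hf : ∀ j, f (j + 1) - f j ≤ s) : nabla α f k ≤ s := by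
  have hprev := hf (k - 1)
  rw [sub_add_cancel] at hprev
  unfold nabla
  nlinarith [hα.1, hα.2, hf k]

end nabla

noncomputable def ramp (ε : ℝ) (k j : ℤ) : ℝ :=
  max 0 (min (min 1 (1 + ε * (j - k))) (-j))

namespace ramp

lemma nonneg (ε : ℝ) (k : ℤ) : 0 ≤ ramp ε k := fun _ => le_max_left _ _

lemma apply_zero (ε : ℝ) (k : ℤ) : ramp ε k 0 = 0 :=
  max_eq_left (by simp)

lemma apply_self {k : ℤ} (hk : k < 0) (ε : ℝ) : ramp ε k k = 1 := by
  have hk' : (1 : ℝ) ≤ -k := by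
    have : (k : ℝ) ≤ -1 := by exact_mod_cast Int.le_sub_one_of_lt hk
    linarith
  simp [ramp, hk']

lemma support_finite {ε : ℝ} (hε : 0 < ε) (k : ℤ) : (Function.support (ramp ε k)).Finite := by
  refine (Set.finite_Icc (k - ⌈1 / ε⌉₊) 0).subset fun j hj => ?_
  by_contra hj'
  apply hj
  rcases not_and_or.1 hj' with hlow | hhigh
  · have hlt : ((j : ℝ) - k) * ε < -1 := by
      have : (j : ℝ) < k - ⌈1 / ε⌉₊ := by exact_mod_cast not_le.1 hlow
      have := Nat.le_ceil (1 / ε)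
      have := (div_lt_iff₀ hε).1 (show 1 / ε < (k : ℝ) - j by linarith)
      linarith
    exact max_eq_left ((min_le_left _ _).trans ((min_le_right _ _).trans (by nlinarith)))
  · have : (0 : ℝ) < j := by exact_mod_cast not_le.1 hhigh
    exact max_eq_left ((min_le_right _ _).trans (by linarith))

lemma succ_le {ε : ℝ} (hε : 0 ≤ ε) (k j : ℤ) : ramp ε k (j + 1) ≤ ramp ε k j + ε := by
  unfold ramp
  have hmin : min (min 1 (1 + ε * ((j + 1 : ℤ) - k))) (-((j + 1 : ℤ) : ℝ)) ≤
      min (min 1 (1 + ε * (j - k))) (-j) + ε := by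
    rw [← min_add_add_right, ← min_add_add_right]
    push_cast
    exact min_le_min (min_le_min (by linarith) (by linarith)) (by linarith)
  exact max_le (by positivity) (hmin.trans (by gcongr; exact le_max_right _ _))

end ramp

section Transport

variable {n : ℕ} {α : ℤ → ℝ} {μ : ℝ → ℤ → ℝ}

lemma tsum_mul_sub_le_of_nabla_le
    (hprob : ∀ t ∈ Set.Icc (0 : ℝ) 1, (∀ k, 0 ≤ μ t k) ∧ HasSum (μ t) 1)
    (heq : ∀ f : ℤ → ℝ, (Function.support f).Finite → ∀ t ∈ Set.Icc (0 : ℝ) 1,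
      HasDerivWithinAt (fun s => ∑' k : ℤ, f k * μ s k)
        ((n : ℝ) * ∑' k : ℤ, nabla α f k * μ t k) (Set.Icc 0 1) t)
    {f : ℤ → ℝ} (hf : (Function.support f).Finite) {s : ℝ} (hs : ∀ k, nabla α f k ≤ s)
    {t₀ t : ℝ} (ht₀ : t₀ ∈ Set.Icc (0 : ℝ) 1) (ht : t ∈ Set.Icc (0 : ℝ) 1) (hle : t₀ ≤ t) :
    ∑' k, f k * μ t k - ∑' k, f k * μ t₀ k ≤ n * s * (t - t₀) :=
  (convex_Icc 0 1).sub_le_mul_sub_of_hasDerivWithinAt_le (heq f hf)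
    (fun u hu => mul_le_mul_of_nonneg_left
      (tsum_mul_le_of_hasSum_one (hprob u hu).1 (hprob u hu).2
        (summable_mul_of_support_finite (nabla.support_finite hf) _) hs) n.cast_nonneg)
    ht₀ ht hle

lemma apply_le_mul_of_lt_zero (hα : ∀ k, α k ∈ Set.Icc (0 : ℝ) 1)
    (hprob : ∀ t ∈ Set.Icc (0 : ℝ) 1, (∀ k, 0 ≤ μ t k) ∧ HasSum (μ t) 1)
    (h0 : ∀ k, μ 0 k = if k = 0 then 1 else 0)
    (heq : ∀ f : ℤ → ℝ, (Function.support f).Finite → ∀ t ∈ Set.Icc (0 : ℝ) 1,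
      HasDerivWithinAt (fun s => ∑' k : ℤ, f k * μ s k)
        ((n : ℝ) * ∑' k : ℤ, nabla α f k * μ t k) (Set.Icc 0 1) t)
    {ε : ℝ} (hε : 0 < ε) {t : ℝ} (ht : t ∈ Set.Icc (0 : ℝ) 1) {k : ℤ} (hk : k < 0) :
    μ t k ≤ n * ε := by
  have hfin := ramp.support_finite hε k
  have hdrift := tsum_mul_sub_le_of_nabla_le hprob heq hfin
    (fun j => nabla.le_of_forall_sub_le (hα j) fun i => by linarith [ramp.succ_le hε.le k i])
    ⟨le_rfl, zero_le_one⟩ ht ht.1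
  have hmass := apply_le_tsum_mul (ramp.nonneg ε k) (hprob t ht).1
    (summable_mul_of_support_finite hfin _) (ramp.apply_self hk ε)
  simp only [h0, mul_ite, mul_one, mul_zero, tsum_ite_eq, ramp.apply_zero] at hdrift
  linarith [mul_le_of_le_one_right (mul_nonneg n.cast_nonneg hε.le) ht.2]

lemma apply_le_mul_of_natCast_lt (hα : ∀ k, α k ∈ Set.Icc (0 : ℝ) 1)
    (hprob : ∀ t ∈ Set.Icc (0 : ℝ) 1, (∀ k, 0 ≤ μ t k) ∧ HasSum (μ t) 1)
    (h1 : ∀ k, μ 1 k = if k = (n : ℤ) then 1 else 0)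
    (heq : ∀ f : ℤ → ℝ, (Function.support f).Finite → ∀ t ∈ Set.Icc (0 : ℝ) 1,
      HasDerivWithinAt (fun s => ∑' k : ℤ, f k * μ s k)
        ((n : ℝ) * ∑' k : ℤ, nabla α f k * μ t k) (Set.Icc 0 1) t)
    {ε : ℝ} (hε : 0 < ε) {t : ℝ} (ht : t ∈ Set.Icc (0 : ℝ) 1) {k : ℤ} (hk : (n : ℤ) < k) :
    μ t k ≤ n * ε := by
  set g : ℤ → ℝ := fun j => ramp ε (n - k) (n - j) with hg
  have hfin : (Function.support g).Finite :=
    (ramp.support_finite hε _).preimage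
      (Set.injOn_of_injective (sub_right_injective (b := (n : ℤ))))
  have hstep (j : ℤ) : (-g) (j + 1) - (-g) j ≤ ε := by
    have := ramp.succ_le hε.le (n - k) (n - (j + 1))
    simp only [hg, Pi.neg_apply, show (n : ℤ) - (j + 1) + 1 = n - j by ring] at this ⊢
    linarith
  have hdrift := tsum_mul_sub_le_of_nabla_le hprob heq (f := -g) (by rwa [Function.support_neg])
    (fun j => nabla.le_of_forall_sub_le (hα j) hstep) ht ⟨zero_le_one, le_rfl⟩ ht.2
  have hmass := apply_le_tsum_mul (fun j => ramp.nonneg ε (n - k) (n - j)) (hprob t ht).1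
    (summable_mul_of_support_finite hfin _) (ramp.apply_self (sub_neg.2 hk) ε)
  simp only [h1, Pi.neg_apply, neg_mul, tsum_neg, mul_ite, mul_one, mul_zero, tsum_ite_eq, hg,
    sub_self, ramp.apply_zero] at hdrift
  nlinarith [ht.1, mul_nonneg n.cast_nonneg hε.le]

end Transport

theorem stmt3_general (n : ℕ) (α : ℤ → ℝ) (hα : ∀ k, α k ∈ Set.Icc (0 : ℝ) 1)
    (μ : ℝ → ℤ → ℝ)
    (hprob : ∀ t ∈ Set.Icc (0 : ℝ) 1, (∀ k, 0 ≤ μ t k) ∧ HasSum (μ t) 1)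
    (h0 : ∀ k, μ 0 k = if k = 0 then 1 else 0)
    (h1 : ∀ k, μ 1 k = if k = (n : ℤ) then 1 else 0)
    (heq : ∀ f : ℤ → ℝ, (Function.support f).Finite → ∀ t ∈ Set.Icc (0 : ℝ) 1,
      HasDerivWithinAt (fun s => ∑' k : ℤ, f k * μ s k)
        ((n : ℝ) * ∑' k : ℤ, nabla α f k * μ t k) (Set.Icc 0 1) t) :
    ∀ t ∈ Set.Icc (0 : ℝ) 1, ∀ k : ℤ, k < 0 ∨ (n : ℤ) < k → μ t k = 0 := by
  intro t ht k hk
  refine le_antisymm (nonpos_of_forall_pos_le_mul (c := n) fun ε hε => ?_) ((hprob t ht).1 k)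
  rcases hk with hk | hk
  · exact apply_le_mul_of_lt_zero hα hprob h0 heq hε ht hk
  · exact apply_le_mul_of_natCast_lt hα hprob h1 heq hε ht hk

theorem stmt3 (n : ℕ) (hn : 1 ≤ n) (α : ℤ → ℝ) (hα : ∀ k, α k ∈ Set.Icc (0 : ℝ) 1)
    (μ : ℝ → ℤ → ℝ)
    (hprob : ∀ t ∈ Set.Icc (0 : ℝ) 1, (∀ k, 0 ≤ μ t k) ∧ HasSum (μ t) 1)
    (h0 : ∀ k, μ 0 k = if k = 0 then 1 else 0)
    (h1 : ∀ k, μ 1 k = if k = (n : ℤ) then 1 else 0)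
    (heq : ∀ f : ℤ → ℝ, (Function.support f).Finite → ∀ t ∈ Set.Icc (0 : ℝ) 1,
      HasDerivWithinAt (fun s => ∑' k : ℤ, f k * μ s k)
        ((n : ℝ) * ∑' k : ℤ, nabla α f k * μ t k) (Set.Icc 0 1) t) :
    ∀ t ∈ Set.Icc (0 : ℝ) 1, ∀ k : ℤ, k < 0 ∨ (n : ℤ) < k → μ t k = 0 :=
  stmt3_general n α hα μ hprob h0 h1 heq
end

section
/- Suppose a family of probability measures (μ_t)_{t∈[0,1]} on ℤ satisfies μ_0 = δ_0, μ_1 = δ_n, and the translation equation d/dt ∑_k f(k)μ_t(k) = n ∑_k (∇f)(k)μ_t(k) for all finitely supported f, where ∇ has coefficients (α_k) ∈ [0,1]. Then α_n = 1. -/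
/-!
Test the translation equation at `t = 1` against the indicator `g` of `n + 1`. Since `μ₁ = δₙ`,
the right-hand side is `n (∇g)(n) = n (1 - αₙ)`. The left-hand side is the derivative of
`t ↦ μ_t(n + 1)`, which is nonnegative on `[0, 1]` and vanishes at `t = 1`; a minimum at the right
endpoint forces a nonpositive one-sided derivative, so `n (1 - αₙ) ≤ 0`, i.e. `αₙ ≥ 1`.
-/

open Finset

open Set

theorem IsMinOn.hasDerivWithinAt_nonpos_of_right_endpoint {f : ℝ → ℝ} {f' a b : ℝ} (hab : a < b)
    (hmin : IsMinOn f (Icc a b) b) (hf : HasDerivWithinAt f f' (Icc a b) b) : f' ≤ 0 := by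
  have hcone : a - b ∈ posTangentConeAt (Icc a b) b :=
    sub_mem_posTangentConeAt_of_segment_subset (by rw [segment_symm, segment_eq_Icc hab.le])
  have hprod : 0 ≤ (a - b) * f' := by
    simpa using hmin.localize.hasFDerivWithinAt_nonneg hf.hasFDerivWithinAt hcone
  exact nonpos_of_mul_nonneg_right hprod (sub_neg.2 hab)

theorem tsum_single_one_mul {ι R : Type*} [DecidableEq ι] [NonAssocSemiring R] [TopologicalSpace R]
    (j : ι) (g : ι → R) : ∑' k, (Pi.single j 1 : ι → R) k * g k = g j := by
  simp [Pi.single_apply]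

theorem tsum_mul_single_one {ι R : Type*} [DecidableEq ι] [NonAssocSemiring R] [TopologicalSpace R]
    (j : ι) (g : ι → R) : ∑' k, g k * (Pi.single j 1 : ι → R) k = g j := by
  simp [Pi.single_apply]

theorem nabla_single_one_succ (α : ℤ → ℝ) (j : ℤ) : nabla α (Pi.single (j + 1) 1) j = 1 - α j := by
  simp [nabla, show j - 1 ≠ j + 1 by omega]

theorem stmt4_general (n : ℕ) (hn : 1 ≤ n) (α : ℤ → ℝ) (hα : ∀ k, α k ∈ Set.Icc (0 : ℝ) 1)
    (μ : ℝ → ℤ → ℝ)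
    (hprob : ∀ t ∈ Set.Icc (0 : ℝ) 1, (∀ k, 0 ≤ μ t k) ∧ HasSum (μ t) 1)
    (h1 : ∀ k, μ 1 k = if k = (n : ℤ) then 1 else 0)
    (heq : ∀ f : ℤ → ℝ, (Function.support f).Finite → ∀ t ∈ Set.Icc (0 : ℝ) 1,
      HasDerivWithinAt (fun s => ∑' k : ℤ, f k * μ s k)
        ((n : ℝ) * ∑' k : ℤ, nabla α f k * μ t k) (Set.Icc 0 1) t) :
    α (n : ℤ) = 1 := by
  have hμ₁ : μ 1 = Pi.single (n : ℤ) 1 := funext fun k => by simp [h1, Pi.single_apply]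
  set g : ℤ → ℝ := Pi.single ((n : ℤ) + 1) 1
  have hderiv := heq g ((finite_singleton _).subset Pi.support_single_subset) 1
    (right_mem_Icc.2 zero_le_one)
  rw [hμ₁, tsum_mul_single_one, nabla_single_one_succ] at hderiv
  have hmin : IsMinOn (fun s => ∑' k, g k * μ s k) (Icc 0 1) 1 :=
    isMinOn_iff.2 fun t ht => by
      simpa [g, tsum_single_one_mul, hμ₁, Pi.single_apply] using (hprob t ht).1 _
  have hnonpos := hmin.hasDerivWithinAt_nonpos_of_right_endpoint zero_lt_one hderiv
  have hnpos : (0 : ℝ) < n := by exact_mod_cast hn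
  exact le_antisymm (hα n).2 (by nlinarith)

theorem stmt4 (n : ℕ) (hn : 1 ≤ n) (α : ℤ → ℝ) (hα : ∀ k, α k ∈ Set.Icc (0 : ℝ) 1)
    (μ : ℝ → ℤ → ℝ)
    (hprob : ∀ t ∈ Set.Icc (0 : ℝ) 1, (∀ k, 0 ≤ μ t k) ∧ HasSum (μ t) 1)
    (h0 : ∀ k, μ 0 k = if k = 0 then 1 else 0)
    (h1 : ∀ k, μ 1 k = if k = (n : ℤ) then 1 else 0)
    (heq : ∀ f : ℤ → ℝ, (Function.support f).Finite → ∀ t ∈ Set.Icc (0 : ℝ) 1,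
      HasDerivWithinAt (fun s => ∑' k : ℤ, f k * μ s k)
        ((n : ℝ) * ∑' k : ℤ, nabla α f k * μ t k) (Set.Icc 0 1) t) :
    α (n : ℤ) = 1 :=
  stmt4_general n hn α hα μ hprob h1 heq
end

section
/- The operator ∇_n lowers the Krawtchouk index: for every r ∈ {0,...,n}, ∇_n φ_r = (r(n-r+1)/(n(1-t)))·φ_{r-1}, with the convention φ_{-1} = 0. -/
/-!
With `A = 1 + (1 - t)X` and `B = 1 - tX`, the generating polynomial of `φ_·(k)` is
`G_k = A^k B^(n-k)`. Since `A - B = X`, `A - (1 - t)X = 1` and `B + tX = 1`, these satisfy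
`k (G_k - G_{k-1}) + (n - k)(G_{k+1} - G_k) = X (n G_k - X G_k')`, and comparing the
coefficients of `X^r` gives `∇_n φ_r` in terms of `φ_{r-1}`.
-/

open Finset Polynomial

theorem Polynomial.coeff_eq_of_forall_eval_eq_sum {R : Type*} [CommRing R] [IsDomain R]
    [Infinite R] {p : R[X]} {a : ℕ → R} {m : ℕ}
    (h : ∀ w, ∑ i ∈ range m, a i * w ^ i = p.eval w) {i : ℕ} (hi : i < m) :
    p.coeff i = a i := by
  have hp : p = ∑ j ∈ range m, C (a j) * X ^ j :=
    Polynomial.funext fun w => by simp [← h w, eval_finsetSum]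
  rw [hp, finsetSum_coeff, sum_eq_single i]
  · simp
  · intro j _ hji
    simp [hji.symm]
  · intro hi'
    exact absurd (mem_range.mpr hi) hi'

theorem Polynomial.coeff_X_mul_derivative {R : Type*} [Semiring R] (p : R[X]) (s : ℕ) :
    (X * derivative p).coeff s = s * p.coeff s := by
  cases s with
  | zero => simp
  | succ s => rw [coeff_X_mul, coeff_derivative, Nat.cast_comm, Nat.cast_succ]

section KrawtchoukGen

variable {R : Type*} [CommRing R]

noncomputable def krawtchoukGen (t : R) (n k : ℕ) : R[X] :=
  (1 + C (1 - t) * X) ^ k * (1 - C t * X) ^ (n - k)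

theorem eval_krawtchoukGen (t w : R) (n k : ℕ) :
    (krawtchoukGen t n k).eval w = (1 + (1 - t) * w) ^ k * (1 - t * w) ^ (n - k) := by
  simp [krawtchoukGen]

theorem krawtchoukGen_lowering (t : R) {n k : ℕ} (hk : k ≤ n) :
    C (k : R) * (krawtchoukGen t n k - krawtchoukGen t n (k - 1))
      + C ((n : R) - k) * (krawtchoukGen t n (k + 1) - krawtchoukGen t n k)
      = X * (C (n : R) * krawtchoukGen t n k - X * derivative (krawtchoukGen t n k)) := by
  obtain ⟨b, rfl⟩ := Nat.exists_eq_add_of_le hk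
  rcases k with _ | a <;> rcases b with _ | b <;>
    simp [krawtchoukGen, derivative_mul, derivative_pow,
      show ∀ a b : ℕ, a + 1 + b - a = b + 1 by omega,
      show ∀ a b : ℕ, a + (b + 1) - (a + 1) = b by omega] <;>
    ring

end KrawtchoukGen

section Krawtchouk

def IsKrawtchouk (n : ℕ) (t : ℝ) (φ : ℕ → ℕ → ℝ) : Prop :=
  ∀ k ≤ n, ∀ w : ℝ,
    ∑ r ∈ range (n + 1), (1 - t) ^ r / (Nat.factorial r : ℝ) * φ r k * w ^ r
      = (1 + (1 - t) * w) ^ k * (1 - t * w) ^ (n - k)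

variable {n : ℕ} {t : ℝ} {φ : ℕ → ℕ → ℝ}

theorem IsKrawtchouk.eq_coeff (hφ : IsKrawtchouk n t φ) (ht : t ≠ 1) {r k : ℕ}
    (hr : r ≤ n) (hk : k ≤ n) :
    φ r k = r.factorial / (1 - t) ^ r * (krawtchoukGen t n k).coeff r := by
  rw [coeff_eq_of_forall_eval_eq_sum
    (fun w => (hφ k hk w).trans (eval_krawtchoukGen t w n k).symm) (Nat.lt_succ_of_le hr)]
  have : (1 - t) ^ r ≠ 0 := pow_ne_zero _ (sub_ne_zero.mpr ht.symm)
  field_simp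

theorem IsKrawtchouk.lowering_mul (hφ : IsKrawtchouk n t φ) (ht : t ≠ 1) {r k : ℕ}
    (hr : r ≤ n) (hk : k ≤ n) :
    (k : ℝ) * (φ r k - φ r (k - 1)) + ((n : ℝ) - k) * (φ r (k + 1) - φ r k)
      = r * ((n : ℝ) - r + 1) / (1 - t) * φ (r - 1) k := by
  -- `φ r (n + 1)` is not determined by `hφ`, but it only occurs with the factor `n - k = 0`.
  have hnext : ((n : ℝ) - k) * φ r (k + 1)
      = ((n : ℝ) - k) * (r.factorial / (1 - t) ^ r * (krawtchoukGen t n (k + 1)).coeff r) := by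
    rcases hk.lt_or_eq with hk | rfl
    · rw [hφ.eq_coeff ht hr hk]
    · simp
  have hcoeff := congrArg (coeff · r) (krawtchoukGen_lowering t hk)
  simp only [coeff_add, coeff_sub, coeff_C_mul] at hcoeff
  rw [mul_sub _ (φ r (k + 1)), hnext, hφ.eq_coeff ht hr hk,
    hφ.eq_coeff ht hr ((k.sub_le 1).trans hk), hφ.eq_coeff ht ((r.sub_le 1).trans hr) hk]
  rcases r with _ | s
  · simp only [coeff_X_mul_zero] at hcoeff
    simp only [pow_zero, Nat.factorial_zero, Nat.cast_zero, zero_mul, zero_div]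
    linear_combination hcoeff
  · simp only [coeff_X_mul, coeff_sub, coeff_C_mul, coeff_X_mul_derivative] at hcoeff
    simp only [Nat.add_sub_cancel, Nat.factorial_succ, pow_succ]
    push_cast
    -- `ring` only inverts products of atoms, so `1 - t` must become one
    generalize 1 - t = u
    linear_combination ((s + 1) * s.factorial / (u ^ s * u)) * hcoeff

end Krawtchouk

theorem stmt12_general (n : ℕ) (t : ℝ) (ht : t ∈ Set.Ioo (0 : ℝ) 1)
    (φ : ℕ → ℕ → ℝ)
    (hφ : ∀ k ≤ n, ∀ w : ℝ,
      ∑ r ∈ range (n + 1), (1 - t) ^ r / (Nat.factorial r : ℝ) * φ r k * w ^ r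
        = (1 + (1 - t) * w) ^ k * (1 - t * w) ^ (n - k))
    (r : ℕ) (hr : r ≤ n) (k : ℕ) (hk : k ≤ n) :
    (k : ℝ) / n * (φ r k - φ r (k - 1)) + ((n : ℝ) - k) / n * (φ r (k + 1) - φ r k)
      = (r : ℝ) * ((n : ℝ) - r + 1) / (n * (1 - t)) * φ (r - 1) k := by
  rw [mul_comm (n : ℝ), ← div_div]
  linear_combination IsKrawtchouk.lowering_mul hφ ht.2.ne hr hk / n

/-- `∇_n` lowers the Krawtchouk index:
`∇_n φ_r = (r(n-r+1)/(n(1-t)))·φ_{r-1}` (with `φ_{-1} = 0`; at `r = 0` the coefficient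
vanishes, and at `k = 0` resp. `k = n` the coefficients of `φ_r(k-1)` resp. `φ_r(k+1)`
vanish, so the conventions are immaterial). -/
theorem stmt12 (n : ℕ) (hn : 1 ≤ n) (t : ℝ) (ht : t ∈ Set.Ioo (0 : ℝ) 1)
    (φ : ℕ → ℕ → ℝ)
    (hφ : ∀ k ≤ n, ∀ w : ℝ,
      ∑ r ∈ range (n + 1), (1 - t) ^ r / (Nat.factorial r : ℝ) * φ r k * w ^ r
        = (1 + (1 - t) * w) ^ k * (1 - t * w) ^ (n - k))
    (r : ℕ) (hr : r ≤ n) (k : ℕ) (hk : k ≤ n) :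
    (k : ℝ) / n * (φ r k - φ r (k - 1)) + ((n : ℝ) - k) / n * (φ r (k + 1) - φ r k)
      = (r : ℝ) * ((n : ℝ) - r + 1) / (n * (1 - t)) * φ (r - 1) k :=
  stmt12_general n t ht φ hφ r hr k hk
end

section
/- The conjectured binomial log-Sobolev inequality Ent_{b_{n,t}}(f) ≤ nt(1-t)·∑_{k=0}^n b_{n,t}(k)·(∇_n f(k))²/f(k) fails in general: for n = 2, t = 1/2, and f(0) = f(2) = 9/10, f(1) = 1/10, the left-hand side strictly exceeds the right-hand side. -/
/-!
For this `f` the gradient vanishes at `k = 1`, so the right-hand side of the conjectured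
inequality is `8/45`, while the entropy equals `(9 log 3 - 5 log 5)/10 = log (3⁹/5⁵)/10`.
Comparing the two amounts to `exp (16/9) < 3⁹/5⁵`, i.e. `e¹⁶ < (3⁹/5⁵)⁹`, which already
follows from `e < 2.7182818286`.
-/

open Finset Real

lemma sixteen_div_nine_lt_log : (16 : ℝ) / 9 < log (3 ^ 9 / 5 ^ 5) := by
  rw [lt_log_iff_exp_lt (by norm_num)]
  have exp_pow_nine : exp (16 / 9) ^ 9 = exp 1 ^ 16 := by
    rw [← exp_nat_mul, ← exp_nat_mul]; norm_num
  have exp_one_pow_lt : exp 1 ^ 16 < 2.7182818286 ^ 16 :=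
    pow_lt_pow_left₀ exp_one_lt_d9 (exp_pos 1).le (by norm_num)
  refine lt_of_pow_lt_pow_left₀ 9 (by norm_num) ?_
  calc exp (16 / 9) ^ 9 = exp 1 ^ 16 := exp_pow_nine
    _ < 2.7182818286 ^ 16 := exp_one_pow_lt
    _ < (3 ^ 9 / 5 ^ 5) ^ 9 := by norm_num

lemma log_three_pow_div_five_pow :
    log (3 ^ 9 / 5 ^ 5) = 9 * log 3 - 5 * log 5 := by
  rw [log_div (by norm_num) (by norm_num), log_pow, log_pow]; push_cast; ring

lemma binomial_half_entropy_eq :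
    9 / 20 * log (9 / 10) + 1 / 20 * log (1 / 10) - 1 / 2 * log (1 / 2)
      = log (3 ^ 9 / 5 ^ 5) / 10 := by
  have log_nine_tenths : log (9 / 10) = 2 * log 3 - log 2 - log 5 := by
    rw [show (9 : ℝ) / 10 = 3 ^ 2 / (2 * 5) by norm_num, log_div (by norm_num) (by norm_num),
      log_pow, log_mul (by norm_num) (by norm_num)]
    push_cast; ring
  have log_one_tenth : log (1 / 10) = -(log 2 + log 5) := by
    rw [show (1 : ℝ) / 10 = (2 * 5)⁻¹ by norm_num, log_inv, log_mul (by norm_num) (by norm_num)]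
  rw [log_nine_tenths, log_one_tenth, one_div 2, log_inv, log_three_pow_div_five_pow]
  ring

/-- the conjectured binomial log-Sobolev inequality fails for `n = 2`,
`t = 1/2` and `f(0) = f(2) = 9/10`, `f(1) = 1/10`: the entropy strictly exceeds the
candidate right-hand side. (The values `f(-1)`, `f(3)` occur only with vanishing
coefficients.) -/
theorem stmt18 (f : ℕ → ℝ) (h0 : f 0 = 9 / 10) (h1 : f 1 = 1 / 10) (h2 : f 2 = 9 / 10) :
    (2 : ℝ) * (1 / 2) * (1 - 1 / 2) *
        ∑ k ∈ range 3, ((Nat.choose 2 k : ℝ) * (1 / 2 : ℝ) ^ k * (1 - 1 / 2 : ℝ) ^ (2 - k)) *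
          ((k : ℝ) / 2 * (f k - f (k - 1)) + ((2 : ℝ) - k) / 2 * (f (k + 1) - f k)) ^ 2 / f k
      < (∑ k ∈ range 3,
            f k * Real.log (f k) * ((Nat.choose 2 k : ℝ) * (1 / 2 : ℝ) ^ k * (1 - 1 / 2 : ℝ) ^ (2 - k)))
        - (∑ k ∈ range 3,
            f k * ((Nat.choose 2 k : ℝ) * (1 / 2 : ℝ) ^ k * (1 - 1 / 2 : ℝ) ^ (2 - k))) *
          Real.log (∑ k ∈ range 3,
            f k * ((Nat.choose 2 k : ℝ) * (1 / 2 : ℝ) ^ k * (1 - 1 / 2 : ℝ) ^ (2 - k))) := by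
  simp only [sum_range_succ, sum_range_zero]
  norm_num [h0, h1, h2]
  linarith [binomial_half_entropy_eq, sixteen_div_nine_lt_log]
end

section
/- For t ∈ (0,1) and w with t(1+(1-t)w) ∈ [0,1], exp(nt(1-t)w·∇̃_n) applied to the constant function 1 evaluates at k to (1+(1-t)w)^k·(1-tw)^{n-k}, for k ∈ {0,...,n}. Equivalently, b_{n,t(1+(1-t)w)}(k)/b_{n,t}(k) = (1+(1-t)w)^k(1-tw)^{n-k}. -/
open Finset

/-- The matrix of the operator `∇̃_n` on functions `{0,...,n} → ℝ`:
`(∇̃_n f)(k) = (k/n)((1-t)/t)f(k-1) − ((n-2k)/n)f(k) − ((n-k)/n)(t/(1-t))f(k+1)`. -/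
noncomputable def tildeMat (n : ℕ) (t : ℝ) : Matrix (Fin (n + 1)) (Fin (n + 1)) ℝ :=
  fun k j =>
    if (j : ℕ) + 1 = (k : ℕ) then (k : ℝ) / n * ((1 - t) / t)
    else if (j : ℕ) = (k : ℕ) then -(((n : ℝ) - 2 * k) / n)
    else if (j : ℕ) = (k : ℕ) + 1 then -(((n : ℝ) - k) / n * (t / (1 - t)))
    else 0

/-!
With `a = 1 + (1 - t) s` and `b = 1 - t s`, the vector `g_s(k) = a^k b^(n-k)` satisfies
`d/ds g_s = n t (1 - t) ∇̃_n g_s`: differentiating lowers the power of `a` or of `b`, and the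
identity `(1 - t) b + t a = 1` turns the three-term recurrence of `∇̃_n` into exactly that
derivative. Since `g_0 = 1`, the function `s ↦ exp((w - s) n t (1 - t) ∇̃_n) g_s` has zero
derivative, so `exp(w n t (1 - t) ∇̃_n) 1 = g_w`. Finally `1 - t a = (1 - t) b`, so `g_w(k)` is
the ratio of binomial weights `b_{n,ta}(k) / b_{n,t}(k)`.
-/

open Matrix

section

variable {𝕂 m n : Type*} [RCLike 𝕂] [Fintype m] [Fintype n]

-- Any norm inducing the product topology would do: `NormedSpace.exp` only sees the topology.
attribute [local instance] Matrix.linftyOpNormedAddCommGroup Matrix.linftyOpNormedSpace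
  Matrix.linftyOpNormedRing Matrix.linftyOpNormedAlgebra

theorem HasDerivAt.mulVec {M : 𝕂 → Matrix m n 𝕂} {v : 𝕂 → n → 𝕂} {M' : Matrix m n 𝕂}
    {v' : n → 𝕂} {x : 𝕂} (hM : HasDerivAt M M' x) (hv : HasDerivAt v v' x) :
    HasDerivAt (fun y => M y *ᵥ v y) (M x *ᵥ v' + M' *ᵥ v x) x :=
  (mulVecBilin 𝕂 𝕂 : Matrix m n 𝕂 →ₗ[𝕂] (n → 𝕂) →ₗ[𝕂] m → 𝕂).toContinuousBilinearMap
    |>.hasDerivAt_of_bilinear (fun _ => hM) (fun _ => hv)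

theorem Matrix.exp_smul_mulVec_of_hasDerivAt [DecidableEq n] (A : Matrix n n 𝕂)
    {g : 𝕂 → n → 𝕂} (hg : ∀ s, HasDerivAt g (A *ᵥ g s) s) (s : 𝕂) :
    NormedSpace.exp (s • A) *ᵥ g 0 = g s := by
  have hconst : ∀ u, HasDerivAt (fun u => NormedSpace.exp ((s - u) • A) *ᵥ g u) 0 u := by
    intro u
    have hexp := (hasDerivAt_exp_smul_const A (s - u)).scomp u ((hasDerivAt_id u).const_sub s)
    exact (hexp.mulVec (hg u)).congr_deriv (by simp [mulVec_mulVec, neg_mulVec])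
  simpa using is_const_of_deriv_eq_zero (fun u => (hconst u).differentiableAt)
    (fun u => (hconst u).deriv) 0 s

end

-- `v (k - 1)` at `k = 0` and `v (n + 1)` are junk, killed by the coefficients `k` and `n - k`.
lemma tildeMat_mulVec (n : ℕ) (t : ℝ) (v : ℕ → ℝ) (k : Fin (n + 1)) :
    (tildeMat n t *ᵥ fun j => v j) k =
      k / n * ((1 - t) / t) * v (k - 1) - (n - 2 * k) / n * v k
        - (n - k) / n * (t / (1 - t)) * v (k + 1) := by
  obtain ⟨k, hk⟩ := k
  set a : ℝ := k / n * ((1 - t) / t)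
  set b : ℝ := -((n - 2 * (k : ℝ)) / n)
  set c : ℝ := -((n - (k : ℝ)) / n * (t / (1 - t)))
  have hsplit : ∀ j : ℕ, (if j + 1 = k then a * v j else if j = k then b * v j
      else if j = k + 1 then c * v j else 0) = (if j + 1 = k then a * v j else 0)
        + (if j = k then b * v j else 0) + (if j = k + 1 then c * v j else 0) := by
    intro j
    split_ifs <;> first | omega | ring
  have hlower : ∑ j ∈ range (n + 1), (if j + 1 = k then a * v j else 0) = a * v (k - 1) := by
    rcases k with _ | i
    · simp [a]
    · simp [sum_ite_eq', show i < n + 1 by omega]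
  have hupper : ∑ j ∈ range (n + 1), (if j = k + 1 then c * v j else 0) = c * v (k + 1) := by
    rcases (show k < n ∨ k = n by omega) with h | rfl
    · simp [sum_ite_eq', h]
    · simp [c]
  simp only [mulVec, dotProduct, tildeMat, ite_mul, zero_mul]
  rw [Fin.sum_univ_eq_sum_range (fun j => if j + 1 = k then a * v j
      else if j = k then b * v j else if j = k + 1 then c * v j else 0),
    sum_congr rfl fun j _ => hsplit j, sum_add_distrib, sum_add_distrib, hlower, hupper,
    sum_ite_eq', if_pos (mem_range.2 hk)]
  simp only [a, b, c]
  ring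

noncomputable def bernsteinRatio (n : ℕ) (t s : ℝ) (k : ℕ) : ℝ :=
  (1 + (1 - t) * s) ^ k * (1 - t * s) ^ (n - k)

lemma natCast_mul_pow_sub_one_mul {R : Type*} [Semiring R] (m : ℕ) (x : R) :
    (m : R) * x ^ (m - 1) * x = m * x ^ m := by
  cases m <;> simp [pow_succ, mul_assoc]

lemma smul_tildeMat_mulVec_bernsteinRatio {n : ℕ} (hn : n ≠ 0) {t : ℝ} (ht₀ : t ≠ 0)
    (ht₁ : t ≠ 1) (s : ℝ) (k : Fin (n + 1)) :
    ((((n : ℝ) * t * (1 - t)) • tildeMat n t) *ᵥ fun j => bernsteinRatio n t s j) k =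
      k * (1 + (1 - t) * s) ^ ((k : ℕ) - 1) * (1 - t) * (1 - t * s) ^ (n - k)
        + (1 + (1 - t) * s) ^ (k : ℕ) * ((n - k : ℕ) * (1 - t * s) ^ (n - k - 1) * -t) := by
  obtain ⟨k, hk⟩ := k
  replace hk : k ≤ n := Nat.lt_succ_iff.1 hk
  set a := 1 + (1 - t) * s
  set b := 1 - t * s
  have hscale : ∀ x y z : ℝ, (n * t * (1 - t)) * (k / n * ((1 - t) / t) * x
      - (n - 2 * k) / n * y - (n - k) / n * (t / (1 - t)) * z)
        = (1 - t) ^ 2 * (k * x) - t * (1 - t) * ((n - 2 * k) * y) - t ^ 2 * ((n - k) * z) := by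
    have : (1 : ℝ) - t ≠ 0 := sub_ne_zero.2 (Ne.symm ht₁)
    intro x y z
    field_simp
  have hprev : (k : ℝ) * bernsteinRatio n t s (k - 1) = k * a ^ (k - 1) * b ^ (n - k) * b := by
    rcases k with _ | k
    · simp
    · rw [bernsteinRatio, Nat.add_sub_cancel, show n - k = n - (k + 1) + 1 by omega, pow_succ]
      ring
  have hcur : ((n : ℝ) - 2 * k) * bernsteinRatio n t s k
      = ((n - k : ℕ) : ℝ) * b ^ (n - k - 1) * b * a ^ k - k * a ^ (k - 1) * a * b ^ (n - k) := by
    rw [natCast_mul_pow_sub_one_mul, natCast_mul_pow_sub_one_mul, Nat.cast_sub hk,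
      bernsteinRatio]
    ring
  have hnext : bernsteinRatio n t s (k + 1) = a ^ k * a * b ^ (n - k - 1) := by
    rw [bernsteinRatio, pow_succ, Nat.sub_sub]
  rw [smul_mulVec, Pi.smul_apply, tildeMat_mulVec, smul_eq_mul, hscale, hprev, hcur, hnext,
    ← Nat.cast_sub hk]
  have hab : (1 - t) * b + t * a = 1 := by ring
  linear_combination ((1 - t) * k * a ^ (k - 1) * b ^ (n - k)
    - t * ((n - k : ℕ) : ℝ) * a ^ k * b ^ (n - k - 1)) * hab

lemma hasDerivAt_bernsteinRatio {n : ℕ} (hn : n ≠ 0) {t : ℝ} (ht₀ : t ≠ 0) (ht₁ : t ≠ 1)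
    (s : ℝ) :
    HasDerivAt (fun s (k : Fin (n + 1)) => bernsteinRatio n t s k)
      ((((n : ℝ) * t * (1 - t)) • tildeMat n t) *ᵥ fun k => bernsteinRatio n t s k) s := by
  have ha : HasDerivAt (fun s => 1 + (1 - t) * s) (1 - t) s := by
    simpa using ((hasDerivAt_id s).const_mul (1 - t)).const_add 1
  have hb : HasDerivAt (fun s => 1 - t * s) (-t) s := by
    simpa using ((hasDerivAt_id s).const_mul t).const_sub 1
  refine hasDerivAt_pi.2 fun k => ?_
  rw [smul_tildeMat_mulVec_bernsteinRatio hn ht₀ ht₁]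
  exact (ha.pow k).mul (hb.pow (n - k))

lemma bernstein_div_bernstein {n k : ℕ} (hk : k ≤ n) {t : ℝ} (ht₀ : t ≠ 0) (ht₁ : t ≠ 1)
    (s : ℝ) :
    ((n.choose k : ℝ) * (t * (1 + (1 - t) * s)) ^ k * (1 - t * (1 + (1 - t) * s)) ^ (n - k)) /
        ((n.choose k : ℝ) * t ^ k * (1 - t) ^ (n - k)) = bernsteinRatio n t s k := by
  have : (1 : ℝ) - t ≠ 0 := sub_ne_zero.2 (Ne.symm ht₁)
  have : (n.choose k : ℝ) ≠ 0 := Nat.cast_ne_zero.2 (Nat.choose_pos hk).ne'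
  rw [show 1 - t * (1 + (1 - t) * s) = (1 - t) * (1 - t * s) by ring, mul_pow, mul_pow,
    bernsteinRatio]
  field_simp

theorem stmt19_general (n : ℕ) (hn : 1 ≤ n) (t : ℝ) (ht : t ∈ Set.Ioo (0 : ℝ) 1) (w : ℝ)
    (k : Fin (n + 1)) :
    (NormedSpace.exp ((((n : ℝ) * t * (1 - t) * w)) • tildeMat n t)).mulVec
        (fun _ => (1 : ℝ)) k
      = (1 + (1 - t) * w) ^ (k : ℕ) * (1 - t * w) ^ (n - (k : ℕ)) ∧
    ((n.choose k : ℝ) * (t * (1 + (1 - t) * w)) ^ (k : ℕ) *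
          (1 - t * (1 + (1 - t) * w)) ^ (n - (k : ℕ))) /
        ((n.choose k : ℝ) * t ^ (k : ℕ) * (1 - t) ^ (n - (k : ℕ)))
      = (1 + (1 - t) * w) ^ (k : ℕ) * (1 - t * w) ^ (n - (k : ℕ)) := by
  obtain ⟨ht₀, ht₁⟩ := ht
  have hexp : NormedSpace.exp (((n : ℝ) * t * (1 - t) * w) • tildeMat n t) *ᵥ (fun _ => 1)
      = fun k : Fin (n + 1) => bernsteinRatio n t w k := by
    have h := Matrix.exp_smul_mulVec_of_hasDerivAt _
      (hasDerivAt_bernsteinRatio (Nat.one_le_iff_ne_zero.1 hn) ht₀.ne' ht₁.ne) w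
    rw [smul_smul, mul_comm w] at h
    simpa [bernsteinRatio] using h
  exact ⟨congrFun hexp k,
    bernstein_div_bernstein (Nat.lt_succ_iff.1 k.isLt) ht₀.ne' ht₁.ne w⟩

/-- `exp(nt(1-t)w·∇̃_n)` applied to the constant function `1` evaluates at
`k` to `(1+(1-t)w)^k (1-tw)^{n-k}`; equivalently, this equals the ratio
`b_{n,t(1+(1-t)w)}(k)/b_{n,t}(k)`. -/
theorem stmt19 (n : ℕ) (hn : 1 ≤ n) (t : ℝ) (ht : t ∈ Set.Ioo (0 : ℝ) 1) (w : ℝ)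
    (hw : t * (1 + (1 - t) * w) ∈ Set.Icc (0 : ℝ) 1) (k : Fin (n + 1)) :
    (NormedSpace.exp ((((n : ℝ) * t * (1 - t) * w)) • tildeMat n t)).mulVec
        (fun _ => (1 : ℝ)) k
      = (1 + (1 - t) * w) ^ (k : ℕ) * (1 - t * w) ^ (n - (k : ℕ)) ∧
    ((n.choose k : ℝ) * (t * (1 + (1 - t) * w)) ^ (k : ℕ) *
          (1 - t * (1 + (1 - t) * w)) ^ (n - (k : ℕ))) /
        ((n.choose k : ℝ) * t ^ (k : ℕ) * (1 - t) ^ (n - (k : ℕ)))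
      = (1 + (1 - t) * w) ^ (k : ℕ) * (1 - t * w) ^ (n - (k : ℕ)) :=
  stmt19_general n hn t ht w k
end
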